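/- arXiv:2404.10248 — 5 statements merged into one kernel-verified Lean document; each statement's English description precedes it below -/
import Mathlib

section
/- Let h : ℂ → ℂ be entire and nonconstant, and let q, c, A, C ∈ ℂ with q ≠ 0 and |A| = 1. If h(qz + c) = A·h(z) + C for all z ∈ ℂ, then |q| = 1. -/
/-!
Differentiating `h (q * z + c) = A * h z + C` gives `‖h' z‖ = ‖q‖ * ‖h' (q * z + c)‖`. If `‖q‖ < 1`,
the affine map `z ↦ q * z + c` is a contraction, so iterating this identity along an orbit, which
converges to the fixed point, forces `h' = 0`. If `‖q‖ > 1`, the same argument applies to the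
inverse relation `h (q⁻¹ * z - q⁻¹ * c) = A⁻¹ * h z - A⁻¹ * C`.
-/

open Filter Topology

lemma ContractingWith.eq_zero_of_norm_le_mul_norm_comp {X E : Type*} [MetricSpace X]
    [CompleteSpace X] [NormedAddGroup E] {K : NNReal} {T : X → X} (hT : ContractingWith K T)
    {g : X → E} (hg : Continuous g) {r : ℝ} (hr₀ : 0 ≤ r) (hr : r < 1)
    (hgT : ∀ x, ‖g x‖ ≤ r * ‖g (T x)‖) (x : X) : g x = 0 := by
  have : Nonempty X := ⟨x⟩
  have hiter : ∀ n : ℕ, ‖g x‖ ≤ r ^ n * ‖g (T^[n] x)‖ := by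
    intro n
    induction n with
    | zero => simp
    | succ n ih =>
      calc ‖g x‖ ≤ r ^ n * ‖g (T^[n] x)‖ := ih
        _ ≤ r ^ n * (r * ‖g (T (T^[n] x))‖) := by gcongr; exact hgT _
        _ = r ^ (n + 1) * ‖g (T^[n + 1] x)‖ := by
          rw [Function.iterate_succ_apply', pow_succ, mul_assoc]
  have hlim : Tendsto (fun n : ℕ => r ^ n * ‖g (T^[n] x)‖) atTop
      (𝓝 (0 * ‖g (fixedPoint T hT)‖)) :=
    (tendsto_pow_atTop_nhds_zero_of_lt_one hr₀ hr).mul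
      ((hg.norm.tendsto _).comp (hT.tendsto_iterate_fixedPoint x))
  rw [zero_mul] at hlim
  exact norm_le_zero_iff.mp (ge_of_tendsto' hlim hiter)

lemma contractingWith_mul_add {𝕜 : Type*} [NormedField 𝕜] {q : 𝕜} (hq : ‖q‖ < 1) (c : 𝕜) :
    ContractingWith ‖q‖₊ (fun z => q * z + c) :=
  ⟨hq, LipschitzWith.of_dist_le_mul fun x y => by
    simp [dist_eq_norm, ← mul_sub, norm_mul]⟩

lemma mul_deriv_comp_mul_add_eq {h : ℂ → ℂ} (hh : Differentiable ℂ h) {q c A C : ℂ}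
    (heq : ∀ z, h (q * z + c) = A * h z + C) (z : ℂ) :
    q * deriv h (q * z + c) = A * deriv h z := by
  have hlhs : HasDerivAt (fun z => h (q * z + c)) (deriv h (q * z + c) * q) z :=
    (hh _).hasDerivAt.comp z
      ((((hasDerivAt_id z).const_mul q).add_const c).congr_deriv (mul_one q))
  have hrhs : HasDerivAt (fun z => h (q * z + c)) (A * deriv h z) z :=
    (((hh z).hasDerivAt.const_mul A).add_const C).congr_of_eventuallyEq (.of_forall heq)
  rw [mul_comm]
  exact hlhs.unique hrhs

lemma exists_eq_const_of_comp_mul_add_eq {h : ℂ → ℂ} (hh : Differentiable ℂ h) {q c A C : ℂ}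
    (hq : ‖q‖ < 1) (hA : ‖A‖ = 1) (heq : ∀ z, h (q * z + c) = A * h z + C) :
    ∃ w, ∀ z, h z = w := by
  have hcontr : ∀ z, ‖deriv h z‖ ≤ ‖q‖ * ‖deriv h (q * z + c)‖ := fun z => by
    rw [← norm_mul, mul_deriv_comp_mul_add_eq hh heq, norm_mul, hA, one_mul]
  have hderiv : ∀ z, deriv h z = 0 :=
    (contractingWith_mul_add hq c).eq_zero_of_norm_le_mul_norm_comp
      ((hh.contDiff (n := 2)).continuous_deriv (by norm_num)) (norm_nonneg q) hq hcontr
  exact ⟨h 0, fun z => is_const_of_deriv_eq_zero hh hderiv z 0⟩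

lemma comp_inv_mul_add_eq {K : Type*} [Field K] {h : K → K} {q c A C : K} (hq : q ≠ 0)
    (hA : A ≠ 0) (heq : ∀ z, h (q * z + c) = A * h z + C) (z : K) :
    h (q⁻¹ * z + -(q⁻¹ * c)) = A⁻¹ * h z + -(A⁻¹ * C) := by
  have := heq (q⁻¹ * z + -(q⁻¹ * c))
  rw [show q * (q⁻¹ * z + -(q⁻¹ * c)) + c = z by field_simp; ring] at this
  rw [this]
  field_simp
  ring

theorem modulus_q_eq_one (h : ℂ → ℂ) (hh : Differentiable ℂ h)
    (hnc : ¬ ∃ w : ℂ, ∀ z : ℂ, h z = w) (q c A C : ℂ) (hq : q ≠ 0)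
    (hA : ‖A‖ = 1) (heq : ∀ z : ℂ, h (q * z + c) = A * h z + C) :
    ‖q‖ = 1 := by
  rcases lt_trichotomy ‖q‖ 1 with hlt | hone | hgt
  · exact absurd (exists_eq_const_of_comp_mul_add_eq hh hlt hA heq) hnc
  · exact hone
  · have hA₀ : A ≠ 0 := norm_ne_zero_iff.mp (hA ▸ one_ne_zero)
    have hq_inv : ‖q⁻¹‖ < 1 := norm_inv q ▸ inv_lt_one_of_one_lt₀ hgt
    have hA_inv : ‖A⁻¹‖ = 1 := by rw [norm_inv, hA, inv_one]
    exact absurd (exists_eq_const_of_comp_mul_add_eq hh hq_inv hA_inv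
      (comp_inv_mul_add_eq hq hA₀ heq)) hnc
end

section
/- Let h : ℂ → ℂ be entire, nonconstant, and nowhere zero. Let c, A, B ∈ ℂ with A ≠ 0, and suppose h(z + c) = A·h(z) + B for all z ∈ ℂ. Then B = 0. -/
/-!
A zero of `A * h z + B` would be a zero of `h (z + c)`, so for `B ≠ 0` the function `h` omits the
two values `0` and `-B / A`, and Picard's little theorem makes it constant.

Picard's theorem is proved along classical lines. If `f` omits `0` and `1`, write
`f = exp (2πi g)`; then `g` omits every integer, and square roots of `g` and `g - 1` give an entire
`H` with `cosh² H = g`. The points `γ` with `cosh² γ ∈ ℕ` form a `4`-net of `ℂ`, so the range of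
`H` contains no disc of radius `4`. On the other hand, maximising `(T - |z - z₀|) |H' z|` over a
disc yields a point `p` and a disc around it on which `|H'| ≤ 2 |H' p|`; Schwarz's lemma for `H'`
and the open mapping estimate then put a disc of radius comparable to `T |H' z₀|` in the range.
Hence `H' ≡ 0`, and `f` is constant.
-/

open Complex Metric Set Filter Topology
open scoped Real

theorem exists_differentiable_exp_eq {f : ℂ → ℂ} (hf : Differentiable ℂ f)
    (hf₀ : ∀ z, f z ≠ 0) : ∃ g : ℂ → ℂ, Differentiable ℂ g ∧ ∀ z, exp (g z) = f z := by
  obtain ⟨F, hF0, hF⟩ := (hf.deriv.div hf hf₀).isExactOn_univ.with_val_at 0 (log (f 0))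
  have hFd : Differentiable ℂ F := fun z ↦ (hF z trivial).differentiableAt
  refine ⟨F, hFd, fun z ↦ ?_⟩
  have hconst : f z * exp (-F z) = f 0 * exp (-F 0) := by
    refine is_const_of_deriv_eq_zero (f := fun z ↦ f z * exp (-F z)) (by fun_prop)
      (fun w ↦ ?_) z 0
    have h : HasDerivAt (fun z ↦ f z * exp (-F z))
        (deriv f w * exp (-F w) + f w * (exp (-F w) * -(deriv f w / f w))) w :=
      (hf w).hasDerivAt.mul (hF w trivial).neg.cexp
    rw [h.deriv]
    field_simp [hf₀ w]
    ring
  rw [hF0, exp_neg, exp_neg, exp_log (hf₀ 0), mul_inv_cancel₀ (hf₀ 0),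
    mul_inv_eq_one₀ (exp_ne_zero _)] at hconst
  exact hconst.symm

theorem exists_differentiable_sq_eq {f : ℂ → ℂ} (hf : Differentiable ℂ f)
    (hf₀ : ∀ z, f z ≠ 0) : ∃ g : ℂ → ℂ, Differentiable ℂ g ∧ ∀ z, g z ^ 2 = f z := by
  obtain ⟨L, hLd, hL⟩ := exists_differentiable_exp_eq hf hf₀
  refine ⟨fun z ↦ exp (L z / 2), (hLd.div_const 2).cexp, fun z ↦ ?_⟩
  rw [← exp_nat_mul, ← hL z]
  congr 1
  push_cast
  ring

theorem exists_differentiable_cosh_sq_eq {f : ℂ → ℂ} (hf : Differentiable ℂ f)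
    (hf₀ : ∀ z, f z ≠ 0) (hf₁ : ∀ z, f z ≠ 1) :
    ∃ g : ℂ → ℂ, Differentiable ℂ g ∧ ∀ z, cosh (g z) ^ 2 = f z := by
  obtain ⟨p, hpd, hp⟩ := exists_differentiable_sq_eq hf hf₀
  obtain ⟨q, hqd, hq⟩ :=
    exists_differentiable_sq_eq (hf.sub_const 1) (fun z ↦ sub_ne_zero.2 (hf₁ z))
  have hpq : ∀ z, (p z - q z) * (p z + q z) = 1 := fun z ↦ by
    linear_combination hp z - hq z
  obtain ⟨g, hgd, hg⟩ := exists_differentiable_exp_eq (hpd.sub hqd)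
    (fun z ↦ left_ne_zero_of_mul_eq_one (hpq z))
  refine ⟨g, hgd, fun z ↦ ?_⟩
  have hexp : exp (g z) = p z - q z := hg z
  have hneg : exp (-g z) = p z + q z := by
    rw [exp_neg, hexp, inv_eq_of_mul_eq_one_right (hpq z)]
  rw [cosh, hexp, hneg, ← hp z]
  ring

theorem Real.exists_cosh_eq_natCast_abs_sub_le (x : ℝ) :
    ∃ a : ℝ, (∃ n : ℕ, Real.cosh a = n) ∧ |a - x| ≤ 2 := by
  wlog hx : 0 ≤ x generalizing x
  · obtain ⟨a, hn, ha⟩ := this (-x) (by linarith)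
    exact ⟨-a, by rwa [Real.cosh_neg], by rw [← abs_neg]; convert ha using 2; ring⟩
  have hstep : Real.cosh x + 1 ≤ Real.cosh (x + 2) := by
    have h2 : 2 ≤ Real.cosh 2 := by
      have : 4 ≤ Real.exp 2 := by
        calc (4 : ℝ) = 2 * 2 := by norm_num
          _ ≤ Real.exp 1 * Real.exp 1 := by gcongr <;> linarith [Real.add_one_le_exp 1]
          _ = Real.exp 2 := by rw [← Real.exp_add]; norm_num
      rw [Real.cosh_eq]
      linarith [Real.exp_pos (-2)]
    rw [Real.cosh_add]
    nlinarith [Real.one_le_cosh x, Real.sinh_nonneg_iff.2 hx,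
      Real.sinh_nonneg_iff.2 (zero_le_two : (0:ℝ) ≤ 2)]
  obtain ⟨a, ⟨hxa, hax⟩, ha⟩ := intermediate_value_Icc (by linarith)
    Real.continuous_cosh.continuousOn
    ⟨Nat.le_ceil (Real.cosh x), (Nat.ceil_lt_add_one (Real.cosh_pos x).le).le.trans hstep⟩
  exact ⟨a, ⟨_, ha⟩, abs_le.2 ⟨by linarith, by linarith⟩⟩

theorem exists_cosh_sq_eq_natCast_dist_lt (w : ℂ) :
    ∃ γ : ℂ, (∃ n : ℕ, cosh γ ^ 2 = n) ∧ dist γ w < 4 := by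
  obtain ⟨a, ⟨n, hn⟩, ha⟩ := Real.exists_cosh_eq_natCast_abs_sub_le w.re
  set j : ℤ := round (w.im / π)
  have hperiodic : Function.Periodic (fun z ↦ cosh z ^ 2) (π * I) := fun z ↦ by
    simp only [cosh_add_pi_mul_I, neg_sq]
  have hj : |j * π - w.im| ≤ π / 2 := by
    rw [show j * π - w.im = (j - w.im / π) * π by field_simp, abs_mul, abs_of_pos Real.pi_pos,
      abs_sub_comm]
    linarith [mul_le_mul_of_nonneg_right (abs_sub_round (w.im / π)) Real.pi_pos.le]
  set γ : ℂ := a + j * (π * I)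
  have hre : (γ - w).re = a - w.re := by simp [γ]
  have him : (γ - w).im = j * π - w.im := by simp [γ]
  refine ⟨γ, ⟨n ^ 2, ?_⟩, ?_⟩
  · refine (hperiodic.int_mul j a).trans ?_
    simp [← ofReal_cosh, hn]
  calc dist γ w ≤ |(γ - w).re| + |(γ - w).im| := by
        rw [dist_eq]; exact norm_le_abs_re_add_abs_im _
    _ ≤ 2 + π / 2 := by rw [hre, him]; linarith
    _ < 4 := by linarith [Real.pi_lt_d2]

theorem exists_closedBall_norm_le_two_mul {E F : Type*} [PseudoMetricSpace E] [ProperSpace E]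
    [NormedAddCommGroup F] {φ : E → F} (hφ : Continuous φ) {z₀ : E} (hz₀ : φ z₀ ≠ 0)
    {T : ℝ} (hT : 0 < T) :
    ∃ p ρ, 0 < ρ ∧ T * ‖φ z₀‖ ≤ 2 * ρ * ‖φ p‖ ∧ ∀ z ∈ closedBall p ρ, ‖φ z‖ ≤ 2 * ‖φ p‖ := by
  set u : E → ℝ := fun z ↦ (T - dist z z₀) * ‖φ z‖
  obtain ⟨p, hpT, hmax⟩ := (isCompact_closedBall z₀ T).exists_isMaxOn
    ⟨z₀, mem_closedBall_self hT.le⟩ (by fun_prop : Continuous u).continuousOn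
  have hup : T * ‖φ z₀‖ ≤ u p := by simpa [u] using hmax (mem_closedBall_self hT.le)
  have hρ : 0 < T - dist p z₀ := by
    by_contra! h
    have : u p ≤ 0 := mul_nonpos_of_nonpos_of_nonneg h (norm_nonneg _)
    have : 0 < T * ‖φ z₀‖ := by positivity
    linarith
  refine ⟨p, (T - dist p z₀) / 2, by positivity, by simpa [u, mul_div_cancel₀] using hup,
    fun z hz ↦ ?_⟩
  have hzp : dist z p ≤ (T - dist p z₀) / 2 := hz
  have hzz₀ : dist z z₀ ≤ dist z p + dist p z₀ := dist_triangle z p z₀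
  have huz : (T - dist p z₀) / 2 * ‖φ z‖ ≤ u z :=
    mul_le_mul_of_nonneg_right (by linarith) (norm_nonneg _)
  have hle : u z ≤ u p := hmax (mem_closedBall.2 (by linarith))
  have : (T - dist p z₀) / 2 * ‖φ z‖ ≤ (T - dist p z₀) / 2 * (2 * ‖φ p‖) := by
    simp only [u] at huz hle; linarith
  exact le_of_mul_le_mul_left this (by positivity)

theorem Convex.norm_sub_sub_smul_deriv_le {𝕜 G : Type*} [RCLike 𝕜] [NormedAddCommGroup G]
    [NormedSpace 𝕜 G] {f : 𝕜 → G} {s : Set 𝕜} (hs : Convex ℝ s)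
    (hf : ∀ w ∈ s, DifferentiableAt 𝕜 f w) {p z : 𝕜} {C : ℝ}
    (hC : ∀ w ∈ s, ‖deriv f w - deriv f p‖ ≤ C) (hp : p ∈ s) (hz : z ∈ s) :
    ‖f z - f p - (z - p) • deriv f p‖ ≤ C * ‖z - p‖ := by
  have hderiv : ∀ w ∈ s, HasDerivWithinAt (fun w ↦ f w - w • deriv f p)
      (deriv f w - deriv f p) s w := fun w hw ↦
    ((hf w hw).hasDerivAt.sub ((hasDerivAt_id w).smul_const (deriv f p))).hasDerivWithinAt
      |>.congr_deriv (by simp)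
  convert norm_image_sub_le_of_norm_hasDerivWithin_le hderiv hC hs hp hz using 2
  simp only [sub_smul]
  abel

theorem ball_subset_image_closedBall_of_norm_deriv_le {f : ℂ → ℂ} (hf : Differentiable ℂ f)
    {p : ℂ} (hp : deriv f p ≠ 0) {ρ : ℝ} (hρ : 0 < ρ)
    (hbound : ∀ z ∈ closedBall p ρ, ‖deriv f z‖ ≤ 2 * ‖deriv f p‖) :
    ball (f p) (‖deriv f p‖ * ρ / 32) ⊆ f '' closedBall p (ρ / 8) := by
  set μ := ‖deriv f p‖
  have hμ : 0 < μ := norm_pos_iff.2 hp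
  have hr : 0 < ρ / 8 := by positivity
  have hderiv : ∀ w ∈ closedBall p (ρ / 8), ‖deriv f w - deriv f p‖ ≤ μ / 2 := by
    intro w hw
    have hmaps : MapsTo (deriv f) (ball p ρ) (closedBall (deriv f p) (3 * μ)) := fun v hv ↦ by
      rw [mem_closedBall, dist_eq_norm]
      linarith [norm_sub_le (deriv f v) (deriv f p), hbound v (ball_subset_closedBall hv)]
    have hwp : dist w p ≤ ρ / 8 := hw
    have := Complex.dist_le_div_mul_dist_of_mapsTo_ball hf.deriv.differentiableOn hmaps
      (mem_ball.2 (by linarith))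
    rw [dist_eq_norm] at this
    calc _ ≤ 3 * μ / ρ * dist w p := this
      _ ≤ 3 * μ / ρ * (ρ / 8) := by gcongr
      _ ≤ μ / 2 := by field_simp; linarith
  have hlower : ∀ z ∈ closedBall p (ρ / 8), μ / 2 * ‖z - p‖ ≤ ‖f z - f p‖ := by
    intro z hz
    have hmv := (convex_closedBall p (ρ / 8)).norm_sub_sub_smul_deriv_le
      (fun w _ ↦ hf w) hderiv (mem_closedBall_self hr.le) hz
    have hlin : ‖(z - p) • deriv f p‖ = μ * ‖z - p‖ := by rw [norm_smul, mul_comm]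
    have := norm_sub_le (f z - f p) (f z - f p - (z - p) • deriv f p)
    rw [sub_sub_cancel, hlin] at this
    linarith
  have hsphere : ∀ z ∈ sphere p (ρ / 8), μ * (ρ / 8) / 2 ≤ ‖f z - f p‖ := fun z hz ↦ by
    have := hlower z (sphere_subset_closedBall hz)
    rwa [← dist_eq_norm, mem_sphere.1 hz, div_mul_eq_mul_div] at this
  have hfreq : ∃ᶠ z in 𝓝 p, f z ≠ f p := by
    refine Frequently.filter_mono (Eventually.frequently (f := 𝓝[≠] p) ?_) nhdsWithin_le_nhds
    filter_upwards [self_mem_nhdsWithin,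
      nhdsWithin_le_nhds (closedBall_mem_nhds p hr)] with z hzp hz heq
    have := hlower z hz
    rw [heq, sub_self, norm_zero] at this
    exact hzp (by simpa [hμ.ne', sub_eq_zero] using this.antisymm (by positivity))
  convert hf.diffContOnCl.ball_subset_image_closedBall hr hsphere hfreq using 2
  ring

theorem exists_ball_subset_range_of_deriv_ne_zero {f : ℂ → ℂ} (hf : Differentiable ℂ f)
    {z₀ : ℂ} (hz₀ : deriv f z₀ ≠ 0) {R : ℝ} (hR : 0 < R) : ∃ w, ball w R ⊆ range f := by
  have hδ : 0 < ‖deriv f z₀‖ := norm_pos_iff.2 hz₀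
  obtain ⟨p, ρ, hρ, hpρ, hbound⟩ := exists_closedBall_norm_le_two_mul hf.deriv.continuous hz₀
    (T := 64 * R / ‖deriv f z₀‖) (by positivity)
  have hp : deriv f p ≠ 0 := fun h ↦ by
    rw [h, norm_zero, mul_zero, div_mul_cancel₀ _ hδ.ne'] at hpρ
    linarith
  refine ⟨f p, (ball_subset_ball ?_).trans
    ((ball_subset_image_closedBall_of_norm_deriv_le hf hp hρ hbound).trans (image_subset_range _ _))⟩
  rw [div_mul_cancel₀ _ hδ.ne'] at hpρ
  linarith

theorem deriv_eq_zero_of_cosh_sq_ne_natCast {f : ℂ → ℂ} (hf : Differentiable ℂ f)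
    (hf_ne : ∀ z (n : ℕ), cosh (f z) ^ 2 ≠ n) (z₀ : ℂ) : deriv f z₀ = 0 := by
  by_contra hz₀
  obtain ⟨w, hw⟩ := exists_ball_subset_range_of_deriv_ne_zero hf hz₀ four_pos
  obtain ⟨γ, ⟨n, hn⟩, hγ⟩ := exists_cosh_sq_eq_natCast_dist_lt w
  obtain ⟨z, rfl⟩ := hw (mem_ball.2 hγ)
  exact hf_ne z n hn

theorem Differentiable.apply_eq_apply_of_forall_ne_zero_of_forall_ne_one {f : ℂ → ℂ}
    (hf : Differentiable ℂ f) (hf₀ : ∀ z, f z ≠ 0) (hf₁ : ∀ z, f z ≠ 1) (z w : ℂ) :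
    f z = f w := by
  obtain ⟨L, hLd, hL⟩ := exists_differentiable_exp_eq hf hf₀
  have h2πI : (2 * π * I : ℂ) ≠ 0 := by simp [Real.pi_ne_zero, I_ne_zero]
  have hL_ne : ∀ z (n : ℕ), L z / (2 * π * I) ≠ n := fun z n hn ↦ hf₁ z <| by
    rw [← hL z, ← div_mul_cancel₀ (L z) h2πI, hn, exp_nat_mul_two_pi_mul_I]
  obtain ⟨H, hHd, hH⟩ := exists_differentiable_cosh_sq_eq
    (f := fun z ↦ L z / (2 * π * I)) (hLd.div_const _)
    (fun z ↦ by exact_mod_cast hL_ne z 0) (fun z ↦ by exact_mod_cast hL_ne z 1)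
  have hHc := is_const_of_deriv_eq_zero hHd
    (deriv_eq_zero_of_cosh_sq_ne_natCast hHd fun z n ↦ hH z ▸ hL_ne z n) z w
  have hLc : L z = L w := by rw [← div_left_inj' h2πI, ← hH z, ← hH w, hHc]
  rw [← hL z, ← hL w, hLc]

theorem Differentiable.apply_eq_apply_of_forall_ne {f : ℂ → ℂ} (hf : Differentiable ℂ f)
    {a b : ℂ} (hab : a ≠ b) (ha : ∀ z, f z ≠ a) (hb : ∀ z, f z ≠ b) (z w : ℂ) :
    f z = f w := by
  have hba : b - a ≠ 0 := sub_ne_zero.2 hab.symm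
  have := ((hf.sub_const a).div_const (b - a)).apply_eq_apply_of_forall_ne_zero_of_forall_ne_one
    (fun z ↦ div_ne_zero (sub_ne_zero.2 (ha z)) hba)
    (fun z h ↦ hb z (by rw [div_eq_one_iff_eq hba, sub_left_inj] at h; exact h)) z w
  rwa [div_left_inj' hba, sub_left_inj] at this

theorem picard_forces_B_zero (h : ℂ → ℂ) (hh : Differentiable ℂ h)
    (hnc : ¬ ∃ w : ℂ, ∀ z : ℂ, h z = w) (hnz : ∀ z : ℂ, h z ≠ 0)
    (c A B : ℂ) (hA : A ≠ 0) (heq : ∀ z : ℂ, h (z + c) = A * h z + B) :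
    B = 0 := by
  by_contra hB
  have homits : ∀ z, h z ≠ -B / A := fun z hz ↦ hnz (z + c) <| by
    rw [heq z, hz, mul_div_cancel₀ _ hA, neg_add_cancel]
  have hne : (0 : ℂ) ≠ -B / A := (div_ne_zero (neg_ne_zero.2 hB) hA).symm
  exact hnc ⟨h 0, fun z ↦ hh.apply_eq_apply_of_forall_ne hne hnz homits z 0⟩
end

section
/- Let P be a polynomial over ℂ and let c ∈ ℂ, c ≠ 0. If exp(P(z + c)) = exp(P(z)) for all z ∈ ℂ, then P has degree at most 1; moreover, writing P(z) = αz + β, one has exp(αc) = 1. -/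
/-!
The difference `Q(z) = P(z + c) - P(z)` is a polynomial with `exp ∘ Q = 1`, so it omits the value
`π i`; a nonconstant complex polynomial is surjective, hence `Q` is a constant `d` with `exp d = 1`.
Then `P(z) - P(0) - (d / c) z` vanishes at every `n c`, `n ∈ ℕ`, so `P = (d / c) X + P(0)`.
-/

open Polynomial

theorem Complex.eq_C_of_forall_eval_ne {f : ℂ[X]} {a : ℂ} (h : ∀ z, f.eval z ≠ a) :
    f = C (f.coeff 0) := by
  refine eq_C_of_degree_le_zero (not_lt.mp fun hpos => ?_)
  obtain ⟨z, hz⟩ := Complex.exists_root (f := f - C a) (by rwa [degree_sub_C hpos])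
  exact h z (by simpa [sub_eq_zero] using hz)

theorem Polynomial.eq_C_mul_X_add_C_of_eval_add_eq {K : Type*} [Field K] [CharZero K] {P : K[X]}
    {c d : K} (hc : c ≠ 0) (h : ∀ x, P.eval (x + c) = P.eval x + d) :
    P = C (d / c) * X + C (P.eval 0) := by
  have hinj : Function.Injective fun n : ℕ => (n : K) * c := fun m n hmn =>
    Nat.cast_injective (mul_right_cancel₀ hc hmn)
  refine eq_of_infinite_eval_eq _ _ ((Set.infinite_range_of_injective hinj).mono ?_)
  rintro _ ⟨n, rfl⟩
  induction n with
  | zero => simp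
  | succ n ih =>
    simp only [Set.mem_ofPred_eq, eval_add, eval_mul, eval_C, eval_X] at ih ⊢
    rw [Nat.cast_succ, add_mul, one_mul, h, ih]
    field_simp
    ring

theorem exp_poly_periodic (P : Polynomial ℂ) (c : ℂ) (hc : c ≠ 0)
    (heq : ∀ z : ℂ, Complex.exp (P.eval (z + c)) = Complex.exp (P.eval z)) :
    P.natDegree ≤ 1 ∧ Complex.exp (P.coeff 1 * c) = 1 := by
  set Q : ℂ[X] := P.comp (X + C c) - P
  have hQ_eval (z : ℂ) : Q.eval z = P.eval (z + c) - P.eval z := by simp [Q, eval_comp]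
  have hexp_Q (z : ℂ) : Complex.exp (Q.eval z) = 1 := by
    rw [hQ_eval, Complex.exp_sub, heq z, div_self (Complex.exp_ne_zero _)]
  have hQ_const : Q = C (Q.coeff 0) := Complex.eq_C_of_forall_eval_ne (a := Real.pi * Complex.I)
    fun z hz => by
      have h := hexp_Q z
      rw [hz, Complex.exp_pi_mul_I] at h
      norm_num at h
  have hshift (z : ℂ) : P.eval (z + c) = P.eval z + Q.coeff 0 := by
    have := congrArg (eval z) hQ_const
    rw [hQ_eval, eval_C] at this
    linear_combination this
  have hP := eq_C_mul_X_add_C_of_eval_add_eq hc hshift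
  refine ⟨hP ▸ natDegree_linear_le, ?_⟩
  have hcoeff : P.coeff 1 * c = Q.coeff 0 := by
    rw [hP]
    simp [hc]
  rw [hcoeff, coeff_zero_eq_eval_zero]
  exact hexp_Q 0
end

section
/- Let n, m be positive integers with n ≠ m, let α, β, c, a, A, B ∈ ℂ with A ≠ 0, B ≠ 0, Aⁿ + Bᵐ = 1, e^{αc} = n/m, and e^{((m−n)/n)·a} = (B/A)ᵐ (a choice of a exists since (1 − n/m)a = n·Log(B/A) can be solved). Define g(z) = e^{αz + β} + a and f(z) = A·e^{g(z)/n}. Then f(z)ⁿ + f(z + c)ᵐ = e^{g(z)} for all z ∈ ℂ. -/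
/-!
Since `e^{αc} = n/m`, the shift `z ↦ z + c` multiplies `e^{αz+β}` by `n/m`, so
`f(z+c)^m = A^m e^{e^{αz+β} + (m/n) a} = A^m e^{((m-n)/n) a} e^{g(z)} = B^m e^{g(z)}`,
while `f(z)^n = A^n e^{g(z)}`. The sum is `(A^n + B^m) e^{g(z)} = e^{g(z)}`.
-/

open Complex

lemma mul_exp_div_pow (A u : ℂ) {n : ℕ} (hn : n ≠ 0) :
    (A * exp (u / n)) ^ n = A ^ n * exp u := by
  rw [mul_pow, ← exp_nat_mul, mul_div_cancel₀ u (Nat.cast_ne_zero.mpr hn)]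

lemma exp_mul_add_add (α β z c : ℂ) :
    exp (α * (z + c) + β) = exp (α * z + β) * exp (α * c) := by
  rw [← exp_add]; ring_nf

lemma mul_exp_shift_pow {n m : ℕ} (hn : n ≠ 0) (hm : m ≠ 0) {α β c a A B : ℂ} (hA : A ≠ 0)
    (hαc : exp (α * c) = (n : ℂ) / (m : ℂ))
    (ha : exp (((m : ℂ) - (n : ℂ)) / (n : ℂ) * a) = (B / A) ^ m) (z : ℂ) :
    (A * exp ((exp (α * (z + c) + β) + a) / n)) ^ m = B ^ m * exp (exp (α * z + β) + a) := by
  have hn' : (n : ℂ) ≠ 0 := Nat.cast_ne_zero.mpr hn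
  have hm' : (m : ℂ) ≠ 0 := Nat.cast_ne_zero.mpr hm
  set w := exp (α * z + β)
  have hexponent : (m : ℂ) * ((w * ((n : ℂ) / m) + a) / n) = (m - n) / n * a + (w + a) := by
    field_simp; ring
  rw [exp_mul_add_add, hαc, mul_pow, ← exp_nat_mul, hexponent, exp_add, ha, div_pow,
    ← mul_assoc, mul_div_cancel₀ _ (pow_ne_zero m hA)]

theorem example_three_general (n m : ℕ) (hn : 0 < n) (hm : 0 < m)
    (α β c a A B : ℂ) (hA : A ≠ 0) (hAB : A ^ n + B ^ m = 1)
    (hαc : Complex.exp (α * c) = (n : ℂ) / (m : ℂ))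
    (ha : Complex.exp (((m : ℂ) - (n : ℂ)) / (n : ℂ) * a) = (B / A) ^ m) :
    ∀ z : ℂ,
      (A * Complex.exp ((Complex.exp (α * z + β) + a) / n)) ^ n
        + (A * Complex.exp ((Complex.exp (α * (z + c) + β) + a) / n)) ^ m
      = Complex.exp (Complex.exp (α * z + β) + a) := by
  intro z
  rw [mul_exp_div_pow _ _ hn.ne', mul_exp_shift_pow hn.ne' hm.ne' hA hαc ha]
  linear_combination exp (exp (α * z + β) + a) * hAB

theorem example_three (n m : ℕ) (hn : 0 < n) (hm : 0 < m) (hnm : n ≠ m)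
    (α β c a A B : ℂ) (hA : A ≠ 0) (hB : B ≠ 0) (hAB : A ^ n + B ^ m = 1)
    (hαc : Complex.exp (α * c) = (n : ℂ) / (m : ℂ))
    (ha : Complex.exp (((m : ℂ) - (n : ℂ)) / (n : ℂ) * a) = (B / A) ^ m) :
    ∀ z : ℂ,
      (A * Complex.exp ((Complex.exp (α * z + β) + a) / n)) ^ n
        + (A * Complex.exp ((Complex.exp (α * (z + c) + β) + a) / n)) ^ m
      = Complex.exp (Complex.exp (α * z + β) + a) :=
  example_three_general n m hn hm α β c a A B hA hAB hαc ha
end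

section
/- Let n be a positive integer, c ∈ ℂ, and let h : ℂ → ℂ be entire with h(z + c) = h(z) for all z. Let A, B, aₒ ∈ ℂ with A ≠ 0, B ≠ 0, Aⁿ + Bⁿ = 1, and e^{aₒ·c} = (B/A)ⁿ. Define g(z) = h(z) + aₒ·z and f(z) = A·e^{g(z)/n}. Then f(z)ⁿ + f(z + c)ⁿ = e^{g(z)} for all z ∈ ℂ. -/
/-! Raising `A e^{g/n}` to the `n`-th power gives `Aⁿ e^{g}`, and the shift by `c` multiplies
`e^{g}` by `e^{a₀ c} = (B/A)ⁿ`, so the two terms sum to `(Aⁿ + Bⁿ) e^{g} = e^{g}`. -/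

open Complex

theorem Complex.exp_div_natCast_pow {n : ℕ} (hn : n ≠ 0) (w : ℂ) :
    exp (w / n) ^ n = exp w := by
  rw [← exp_nat_mul, mul_div_cancel₀ _ (Nat.cast_ne_zero.mpr hn)]

theorem Complex.mul_exp_div_natCast_pow {n : ℕ} (hn : n ≠ 0) (A w : ℂ) :
    (A * exp (w / n)) ^ n = A ^ n * exp w := by
  rw [mul_pow, exp_div_natCast_pow hn]

theorem example_four_general (n : ℕ) (hn : 0 < n) (c : ℂ) (h : ℂ → ℂ)
    (hper : ∀ z : ℂ, h (z + c) = h z)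
    (A B a₀ : ℂ) (hA : A ≠ 0) (hAB : A ^ n + B ^ n = 1)
    (ha : Complex.exp (a₀ * c) = (B / A) ^ n) :
    ∀ z : ℂ,
      (A * Complex.exp ((h z + a₀ * z) / n)) ^ n
        + (A * Complex.exp ((h (z + c) + a₀ * (z + c)) / n)) ^ n
      = Complex.exp (h z + a₀ * z) := by
  intro z
  have hshift : h (z + c) + a₀ * (z + c) = (h z + a₀ * z) + a₀ * c := by
    rw [hper]; ring
  have hBA : A ^ n * (B / A) ^ n = B ^ n := by
    rw [← mul_pow, mul_div_cancel₀ _ hA]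
  rw [hshift, mul_exp_div_natCast_pow hn.ne', mul_exp_div_natCast_pow hn.ne', exp_add (h z + a₀ * z), ha]
  linear_combination exp (h z + a₀ * z) * (hBA + hAB)

theorem example_four (n : ℕ) (hn : 0 < n) (c : ℂ) (h : ℂ → ℂ)
    (hh : Differentiable ℂ h) (hper : ∀ z : ℂ, h (z + c) = h z)
    (A B a₀ : ℂ) (hA : A ≠ 0) (hB : B ≠ 0) (hAB : A ^ n + B ^ n = 1)
    (ha : Complex.exp (a₀ * c) = (B / A) ^ n) :
    ∀ z : ℂ,
      (A * Complex.exp ((h z + a₀ * z) / n)) ^ n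
        + (A * Complex.exp ((h (z + c) + a₀ * (z + c)) / n)) ^ n
      = Complex.exp (h z + a₀ * z) :=
  example_four_general n hn c h hper A B a₀ hA hAB ha
end
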